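/- arXiv:2109.08137 — 3 statements merged into one kernel-verified Lean document; each statement's English description precedes it below -/
import Mathlib

section
/- Let Λ = ℤ^{1+n} with the bilinear form (x,y) = x₀y₀ − x₁y₁ − ⋯ − xₙyₙ and K = −3H + E₁ + ⋯ + Eₙ, with 3 ≤ n ≤ 8. For a root α ∈ Φ = {α : (α,α) = −2, (α,K) = 0}, define α^∨ ∈ Hom(Λ, ℤ) by α^∨(λ) = (−α, λ). Then the quadruple (Λ, Φ, Λ^∨ = Hom(Λ,ℤ), Φ^∨ = {α^∨ : α ∈ Φ}) is a root datum: for each α ∈ Φ, α^∨(α) = 2, the reflection λ ↦ λ − α^∨(λ)·α preserves Φ, and the dual reflection φ ↦ φ − φ(α)·α^∨ preserves Φ^∨. -/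
/-- The Picard lattice of a del Pezzo surface of degree 9-n (3 ≤ n ≤ 8) together with
Manin's root system Φ and the coroots α^∨ = (-α, ·) forms a root datum:
⟨α^∨, α⟩ = 2, the reflections preserve Φ, and the dual reflections preserve Φ^∨. -/
theorem stmt_2 (n : ℕ) (h1 : 3 ≤ n) (h2 : n ≤ 8)
    (B : (Fin (n+1) → ℤ) → (Fin (n+1) → ℤ) → ℤ)
    (hB : ∀ x y, B x y = x 0 * y 0 - ∑ i : Fin n, x i.succ * y i.succ)
    (K : Fin (n+1) → ℤ)
    (hK0 : K 0 = -3) (hKi : ∀ i : Fin n, K i.succ = 1)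
    (Φ : Set (Fin (n+1) → ℤ))
    (hΦ : Φ = {α | B α α = -2 ∧ B α K = 0})
    (coroot : (Fin (n+1) → ℤ) → Module.Dual ℤ (Fin (n+1) → ℤ))
    (hcoroot : ∀ α lam, coroot α lam = -(B α lam))
    (Φv : Set (Module.Dual ℤ (Fin (n+1) → ℤ)))
    (hΦv : Φv = coroot '' Φ) :
    ∀ α ∈ Φ,
      coroot α α = 2 ∧
      (∀ β ∈ Φ, β - coroot α β • α ∈ Φ) ∧
      (∀ φ ∈ Φv, φ - φ α • coroot α ∈ Φv) := by
  have hsymm : ∀ x y, B x y = B y x := by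
    intro x y
    rw [hB, hB]
    congr 1
    · ring
    · exact Finset.sum_congr rfl fun i _ => by ring
  have hlin : ∀ x y (c : ℤ) z, B (x - c • y) z = B x z - c * B y z := by
    intro x y c z
    simp only [hB, Pi.sub_apply, Pi.smul_apply, smul_eq_mul]
    have key : ∑ i : Fin n, (x i.succ - c * y i.succ) * z i.succ
        = ∑ i : Fin n, x i.succ * z i.succ - c * ∑ i : Fin n, y i.succ * z i.succ := by
      rw [Finset.mul_sum, ← Finset.sum_sub_distrib]
      exact Finset.sum_congr rfl fun i _ => by ring
    rw [key]; ring
  subst hΦ hΦv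
  intro α hα
  obtain ⟨hαα, hαK⟩ := hα
  refine ⟨by rw [hcoroot, hαα]; ring, ?_, ?_⟩
  · intro β hβ
    obtain ⟨hββ, hβK⟩ := hβ
    set c : ℤ := coroot α β with hc
    have hcB : c = -(B α β) := hcoroot α β
    constructor
    · have h1 : B (β - c • α) (β - c • α) = B β (β - c • α) - c * B α (β - c • α) :=
        hlin _ _ _ _
      rw [h1, hsymm β (β - c • α), hsymm α (β - c • α), hlin, hlin,
        hsymm β α, hββ, hαα, hcB]
      ring
    · rw [hlin, hβK, hαK]; ring
  · intro φ hφ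
    obtain ⟨β, hβ, rfl⟩ := hφ
    obtain ⟨hββ, hβK⟩ := hβ
    set c : ℤ := coroot α β with hc
    have hmem : β - c • α ∈ {α | B α α = -2 ∧ B α K = 0} := by
      have hcB : c = -(B α β) := hcoroot α β
      constructor
      · have h1 : B (β - c • α) (β - c • α) = B β (β - c • α) - c * B α (β - c • α) :=
          hlin _ _ _ _
        rw [h1, hsymm β (β - c • α), hsymm α (β - c • α), hlin, hlin,
          hsymm β α, hββ, hαα, hcB]
        ring
      · rw [hlin, hβK, hαK]; ring
    refine ⟨β - c • α, hmem, ?_⟩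
    apply LinearMap.ext
    intro lam
    have hval2 : -B β α = c := by
      rw [hsymm, ← hcoroot, hc]
    simp only [LinearMap.sub_apply, LinearMap.smul_apply, smul_eq_mul, hcoroot]
    rw [hlin, hval2]
    ring
end

section
/- Let Λ = ℤ^{1+n} with bilinear form (x,y) = x₀y₀ − x₁y₁ − ⋯ − xₙyₙ, K = −3H + E₁ + ⋯ + Eₙ, and 3 ≤ n ≤ 8. The subgroup of Hom(Λ, ℤ) generated by the coroots α^∨ (α ∈ Φ, α^∨ = (−α, ·)) equals {φ ∈ Hom(Λ, ℤ) : φ(K) = 0}. -/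
/-- The subgroup of Hom(Λ, ℤ) generated by the coroots α^∨ (α ∈ Φ) equals the
annihilator {φ : φ(K) = 0} of the canonical class. -/
theorem stmt_3 (n : ℕ) (h1 : 3 ≤ n) (h2 : n ≤ 8)
    (B : (Fin (n+1) → ℤ) → (Fin (n+1) → ℤ) → ℤ)
    (hB : ∀ x y, B x y = x 0 * y 0 - ∑ i : Fin n, x i.succ * y i.succ)
    (K : Fin (n+1) → ℤ)
    (hK0 : K 0 = -3) (hKi : ∀ i : Fin n, K i.succ = 1)
    (Φ : Set (Fin (n+1) → ℤ))
    (hΦ : Φ = {α | B α α = -2 ∧ B α K = 0})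
    (coroot : (Fin (n+1) → ℤ) → Module.Dual ℤ (Fin (n+1) → ℤ))
    (hcoroot : ∀ α lam, coroot α lam = -(B α lam)) :
    (AddSubgroup.closure (coroot '' Φ) : Set (Module.Dual ℤ (Fin (n+1) → ℤ)))
      = {φ : Module.Dual ℤ (Fin (n+1) → ℤ) | φ K = 0} := by
  classical
  -- work with the ℤ-submodule span instead of the subgroup closure
  rw [← Submodule.span_int_eq_addSubgroupClosure]
  -- the target submodule
  let T : Submodule ℤ (Module.Dual ℤ (Fin (n+1) → ℤ)) :=
    { carrier := {φ | φ K = 0}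
      zero_mem' := by simp
      add_mem' := by
        intro x y hx hy
        simp only [Set.mem_setOf_eq, LinearMap.add_apply] at *
        omega
      smul_mem' := by
        intro c x hx
        simp only [Set.mem_setOf_eq, LinearMap.smul_apply, smul_eq_mul] at *
        simp [hx] }
  suffices h : Submodule.span ℤ (coroot '' Φ) = T by
    rw [Submodule.coe_toAddSubgroup, h]; rfl
  apply le_antisymm
  · rw [Submodule.span_le]
    rintro _ ⟨α, hα, rfl⟩
    rw [hΦ] at hα
    show coroot α K = 0
    rw [hcoroot, hα.2, neg_zero]
  · intro φ hφ
    have hφK : φ K = 0 := hφ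
    -- coordinates of φ in the dual basis
    set a : Fin (n+1) → ℤ := fun m => φ (Pi.single m 1) with ha
    -- the three distinguished indices
    have hn : 2 < n := h1
    set i₀ : Fin n := ⟨0, by omega⟩ with hi0
    set i₁ : Fin n := ⟨1, by omega⟩ with hi1
    set i₂ : Fin n := ⟨2, by omega⟩ with hi2
    have h01 : i₀ ≠ i₁ := by simp [hi0, hi1, Fin.ext_iff]
    have h02 : i₀ ≠ i₂ := by simp [hi0, hi2, Fin.ext_iff]
    have h12 : i₁ ≠ i₂ := by simp [hi1, hi2, Fin.ext_iff]
    -- indicator sum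
    have hind : ∀ (c : ℤ) (k : Fin n),
        (if k = i₀ ∨ k = i₁ ∨ k = i₂ then c else 0)
          = (if k = i₀ then c else 0) + (if k = i₁ then c else 0)
            + (if k = i₂ then c else 0) := by
      intro c k
      by_cases e0 : k = i₀ <;> by_cases e1 : k = i₁ <;> by_cases e2 : k = i₂ <;>
        simp_all
    have hsum_ind : ∀ c : ℤ,
        (∑ k : Fin n, if k = i₀ ∨ k = i₁ ∨ k = i₂ then c else 0) = 3 * c := by
      intro c
      simp only [hind]
      rw [Finset.sum_add_distrib, Finset.sum_add_distrib]
      simp [Finset.sum_ite_eq']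
      ring
    -- the linear relation coming from φ K = 0
    have hK3 : ∑ i : Fin n, a i.succ = 3 * a 0 := by
      have hKdec : K = ∑ m : Fin (n+1), K m • Pi.single m 1 := by
        funext p
        rw [Finset.sum_apply]
        simp [Pi.single_apply]
      have h2' : φ K = ∑ m : Fin (n+1), K m * a m := by
        conv_lhs => rw [hKdec]
        rw [map_sum]
        refine Finset.sum_congr rfl fun m _ => ?_
        rw [map_smul, smul_eq_mul]
      rw [Fin.sum_univ_succ, hK0] at h2'
      simp only [hKi, one_mul] at h2'
      rw [hφK] at h2'
      omega
    -- the root H - E₁ - E₂ - E₃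
    obtain ⟨αH, hαH⟩ : ∃ f : Fin (n+1) → ℤ, f = fun m => if m = 0 then 1
        else if m = i₀.succ ∨ m = i₁.succ ∨ m = i₂.succ then -1 else 0 := ⟨_, rfl⟩
    have hαH0 : αH 0 = 1 := by simp [hαH]
    have hαHs : ∀ k : Fin n,
        αH k.succ = if k = i₀ ∨ k = i₁ ∨ k = i₂ then -1 else 0 := by
      intro k
      simp [hαH, Fin.succ_ne_zero, Fin.succ_inj]
    have hαHΦ : αH ∈ Φ := by
      rw [hΦ]
      constructor
      · rw [hB, hαH0]
        have h3 : ∀ k : Fin n,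
            αH k.succ * αH k.succ = if k = i₀ ∨ k = i₁ ∨ k = i₂ then 1 else 0 := by
          intro k; rw [hαHs]; split <;> ring
        rw [Finset.sum_congr rfl fun k _ => h3 k, hsum_ind]
        norm_num
      · rw [hB, hαH0, hK0]
        have h3 : ∀ k : Fin n,
            αH k.succ * K k.succ = if k = i₀ ∨ k = i₁ ∨ k = i₂ then -1 else 0 := by
          intro k; rw [hαHs, hKi]; ring
        rw [Finset.sum_congr rfl fun k _ => h3 k, hsum_ind]
        norm_num
    -- the roots Eᵢ - E₁ (i ≠ 1)
    obtain ⟨αd, hαd⟩ : ∃ f : Fin n → (Fin (n+1) → ℤ),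
        f = fun i m => if m = i.succ then 1 else if m = i₀.succ then -1 else 0 := ⟨_, rfl⟩
    have hαd0 : ∀ i, αd i 0 = 0 := by
      intro i
      simp [hαd, (Fin.succ_ne_zero i).symm, (Fin.succ_ne_zero i₀).symm]
    have hαds : ∀ i k : Fin n,
        αd i k.succ = if k = i then 1 else if k = i₀ then -1 else 0 := by
      intro i k
      simp [hαd, Fin.succ_inj]
    have hαdΦ : ∀ i : Fin n, i ≠ i₀ → αd i ∈ Φ := by
      intro i hi
      rw [hΦ]
      constructor
      · rw [hB, hαd0]
        have h3 : ∀ k : Fin n, αd i k.succ * αd i k.succ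
            = (if k = i then 1 else 0) + (if k = i₀ then 1 else 0) := by
          intro k; rw [hαds]
          rcases eq_or_ne k i with e1 | e1
          · subst e1
            simp only [if_pos rfl, if_neg hi]
            norm_num
          · rcases eq_or_ne k i₀ with e2 | e2
            · subst e2
              simp only [if_neg e1, if_pos rfl]
              norm_num
            · simp only [if_neg e1, if_neg e2]
              norm_num
        rw [Finset.sum_congr rfl fun k _ => h3 k, Finset.sum_add_distrib]
        simp [Finset.sum_ite_eq']
      · rw [hB, hαd0, hK0]
        have h3 : ∀ k : Fin n, αd i k.succ * K k.succ
            = (if k = i then 1 else 0) + (if k = i₀ then -1 else 0) := by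
          intro k; rw [hαds, hKi]
          rcases eq_or_ne k i with e1 | e1
          · subst e1
            simp only [if_pos rfl, if_neg hi]
            norm_num
          · rcases eq_or_ne k i₀ with e2 | e2
            · subst e2
              simp only [if_neg e1, if_pos rfl]
              norm_num
            · simp only [if_neg e1, if_neg e2]
              norm_num
        rw [Finset.sum_congr rfl fun k _ => h3 k, Finset.sum_add_distrib]
        simp [Finset.sum_ite_eq']
    -- evaluation of coroots on the standard basis
    have hev0 : ∀ α : Fin (n+1) → ℤ, coroot α (Pi.single 0 1) = -(α 0) := by
      intro α
      rw [hcoroot, hB]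
      have h3 : ∀ k : Fin n, α k.succ * (Pi.single 0 1 : Fin (n+1) → ℤ) k.succ = 0 := by
        intro k
        rw [Pi.single_apply]
        simp [Fin.succ_ne_zero]
      rw [Finset.sum_congr rfl fun k _ => h3 k]
      simp
    have hevs : ∀ (α : Fin (n+1) → ℤ) (j : Fin n),
        coroot α (Pi.single j.succ 1) = α j.succ := by
      intro α j
      rw [hcoroot, hB]
      have h0 : (Pi.single j.succ 1 : Fin (n+1) → ℤ) 0 = 0 := by
        rw [Pi.single_apply]
        simp [(Fin.succ_ne_zero j).symm]
      have h3 : ∀ k : Fin n, α k.succ * (Pi.single j.succ 1 : Fin (n+1) → ℤ) k.succ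
          = if k = j then α k.succ else 0 := by
        intro k
        by_cases hk : k = j
        · subst hk; simp
        · rw [Pi.single_apply]
          simp [Fin.succ_inj, hk]
      rw [h0, Finset.sum_congr rfl fun k _ => h3 k]
      simp [Finset.sum_ite_eq']
    -- the generators
    obtain ⟨W, hW⟩ : ∃ f : Fin n → Module.Dual ℤ (Fin (n+1) → ℤ),
        f = fun i => if i = i₀ then 0 else coroot (αd i) := ⟨_, rfl⟩
    have hWmem : ∀ i, W i ∈ Submodule.span ℤ (coroot '' Φ) := by
      intro i
      simp only [hW]
      by_cases hi : i = i₀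
      · simp [hi]
      · simp only [if_neg hi]
        exact Submodule.subset_span ⟨αd i, hαdΦ i hi, rfl⟩
    have hHmem : coroot αH ∈ Submodule.span ℤ (coroot '' Φ) :=
      Submodule.subset_span ⟨αH, hαHΦ, rfl⟩
    -- coefficients
    obtain ⟨b, hb⟩ : ∃ f : Fin n → ℤ,
        f = fun i => a i.succ - (if i = i₀ ∨ i = i₁ ∨ i = i₂ then a 0 else 0) := ⟨_, rfl⟩
    have hbsum : ∑ i : Fin n, b i = 0 := by
      simp only [hb]
      rw [Finset.sum_sub_distrib, hsum_ind, hK3]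
      ring
    -- the key identity
    have key : φ = (-(a 0)) • coroot αH + ∑ i : Fin n, b i • W i := by
      apply Module.Basis.ext (Pi.basisFun ℤ (Fin (n+1)))
      intro m
      simp only [Pi.basisFun_apply, LinearMap.add_apply, LinearMap.smul_apply,
        LinearMap.coe_sum, Finset.sum_apply, smul_eq_mul]
      induction m using Fin.cases with
      | zero =>
        have hWz : ∀ i : Fin n, W i (Pi.single 0 1 : Fin (n+1) → ℤ) = 0 := by
          intro i
          simp only [hW]
          by_cases hi : i = i₀ <;> simp [hi, hev0, hαd0]
        simp only [hev0, hαH0, hWz, mul_zero, Finset.sum_const_zero, add_zero]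
        simp [ha]
      | succ j =>
        rw [hevs, hαHs]
        have hWj : ∀ i : Fin n, W i (Pi.single j.succ 1 : Fin (n+1) → ℤ)
            = if i = i₀ then 0 else (if j = i then 1 else if j = i₀ then -1 else 0) := by
          intro i
          simp only [hW]
          by_cases hi : i = i₀
          · simp [hi]
          · rw [if_neg hi, if_neg hi, hevs, hαds]
        simp only [hWj]
        by_cases hj : j = i₀
        · subst hj
          have h3 : ∀ i : Fin n,
              b i * (if i = i₀ then 0 else (if i₀ = i then 1 else if i₀ = i₀ then -1 else 0))
                = (if i = i₀ then b i else 0) - b i := by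
            intro i
            by_cases hi : i = i₀
            · simp [hi]
            · have : i₀ ≠ i := fun h => hi h.symm
              simp [hi, this]
          rw [Finset.sum_congr rfl fun i _ => h3 i, Finset.sum_sub_distrib, hbsum]
          have hi₀S : (i₀ = i₀ ∨ i₀ = i₁ ∨ i₀ = i₂) := Or.inl rfl
          simp only [Finset.sum_ite_eq', Finset.mem_univ, if_pos hi₀S, if_true, sub_zero]
          simp only [hb, ha, if_pos hi₀S, true_or, if_true]
          ring
        · have h3 : ∀ i : Fin n,
              b i * (if i = i₀ then 0 else (if j = i then 1 else if j = i₀ then -1 else 0))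
                = if i = j then b i else 0 := by
            intro i
            by_cases hi : i = i₀
            · subst hi
              have : i₀ ≠ j := fun h => hj h.symm
              simp [this]
            · by_cases hij : i = j
              · subst hij; simp [hi]
              · have : j ≠ i := fun h => hij h.symm
                simp [hi, hij, this, hj]
          rw [Finset.sum_congr rfl fun i _ => h3 i]
          simp only [Finset.sum_ite_eq', Finset.mem_univ, if_true]
          simp only [hb, ha]
          by_cases hjS : j = i₀ ∨ j = i₁ ∨ j = i₂ <;> simp [hjS]
    rw [key]
    exact Submodule.add_mem _ (Submodule.smul_mem _ _ hHmem)
      (Submodule.sum_mem _ fun i _ => Submodule.smul_mem _ _ (hWmem i))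
end

section
/- Let Λ = ℤ^{1+6} with bilinear form (x,y) = x₀y₀ − ⋯ − x₆y₆, K = −3H + E₁ + ⋯ + E₆, Φ the E₆ root system in Λ, and W the group generated by the reflections s_α. Then W acts transitively on the set of 27 classes λ with (λ,λ) = −1 and (λ,K) = −1. -/
namespace S9

abbrev V := Fin 7 → ℤ

def b (x y : V) : ℤ := x 0 * y 0 - ∑ i : Fin 6, x i.succ * y i.succ

lemma b_add_right (α x y : V) : b α (x + y) = b α x + b α y := by
  simp [b, Pi.add_apply, mul_add, Finset.sum_add_distrib]; ring

lemma b_smul_right (α : V) (c : ℤ) (x : V) : b α (c • x) = c * b α x := by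
  simp only [b, Pi.smul_apply, smul_eq_mul, mul_sub, Finset.mul_sum]
  congr 1
  · ring
  · exact Finset.sum_congr rfl (fun i _ => by ring)

def refl (α : V) (h : b α α = -2) : V ≃ₗ[ℤ] V where
  toFun x := x + b α x • α
  invFun x := x + b α x • α
  map_add' x y := by simp only [b_add_right, add_smul]; abel
  map_smul' c x := by simp only [b_smul_right, mul_smul, smul_add, smul_eq_mul,
    RingHom.id_apply]
  left_inv x := by
    show (x + b α x • α) + b α (x + b α x • α) • α = x
    rw [b_add_right, b_smul_right, h]
    have : b α x + b α x * (-2) = - b α x := by ring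
    rw [this, neg_smul]; abel
  right_inv x := by
    show (x + b α x • α) + b α (x + b α x • α) • α = x
    rw [b_add_right, b_smul_right, h]
    have : b α x + b α x * (-2) = - b α x := by ring
    rw [this, neg_smul]; abel

lemma refl_apply (α : V) (h : b α α = -2) (x : V) : refl α h x = x + b α x • α := rfl

lemma mul_apply (e₁ e₂ : V ≃ₗ[ℤ] V) (x : V) : (e₁ * e₂) x = e₁ (e₂ x) := rfl

def Sgen (K : V) : Set (V ≃ₗ[ℤ] V) :=
  {s | ∃ α ∈ {α : V | b α α = -2 ∧ b α K = 0}, ∀ lam, s lam = lam + b α lam • α}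

lemma bK (K : V) (hK0 : K 0 = -3) (hKi : ∀ i : Fin 6, K i.succ = 1) (x : V) :
    b x K = -3 * x 0 - (x 1 + x 2 + x 3 + x 4 + x 5 + x 6) := by
  have : ∀ i : Fin 6, x i.succ * K i.succ = x i.succ := by
    intro i; rw [hKi]; ring
  rw [b, hK0, Finset.sum_congr rfl (fun i _ => this i), Fin.sum_univ_six]
  show x 0 * -3 - (x 1 + x 2 + x 3 + x 4 + x 5 + x 6) = _
  ring

lemma bdiag (x : V) :
    b x x = x 0 * x 0 - (x 1 * x 1 + x 2 * x 2 + x 3 * x 3 + x 4 * x 4 + x 5 * x 5 + x 6 * x 6) := by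
  rw [b, Fin.sum_univ_six]; rfl

lemma rmem (K : V) (hK0 : K 0 = -3) (hKi : ∀ i : Fin 6, K i.succ = 1)
    (α : V) (h : b α α = -2) (h2 : -3 * α 0 - (α 1 + α 2 + α 3 + α 4 + α 5 + α 6) = 0) :
    refl α h ∈ Subgroup.closure (Sgen K) := by
  apply Subgroup.subset_closure
  exact ⟨α, ⟨h, by rw [bK K hK0 hKi, h2]⟩, fun lam => rfl⟩


def lines : List V := [![0,1,0,0,0,0,0], ![0,0,1,0,0,0,0], ![0,0,0,1,0,0,0], ![0,0,0,0,1,0,0], ![0,0,0,0,0,1,0], ![0,0,0,0,0,0,1], ![1,-1,-1,0,0,0,0], ![1,-1,0,-1,0,0,0], ![1,-1,0,0,-1,0,0], ![1,-1,0,0,0,-1,0], ![1,-1,0,0,0,0,-1], ![1,0,-1,-1,0,0,0], ![1,0,-1,0,-1,0,0], ![1,0,-1,0,0,-1,0], ![1,0,-1,0,0,0,-1], ![1,0,0,-1,-1,0,0], ![1,0,0,-1,0,-1,0], ![1,0,0,-1,0,0,-1], ![1,0,0,0,-1,-1,0], ![1,0,0,0,-1,0,-1], ![1,0,0,0,0,-1,-1],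 ![2,0,-1,-1,-1,-1,-1], ![2,-1,0,-1,-1,-1,-1], ![2,-1,-1,0,-1,-1,-1], ![2,-1,-1,-1,0,-1,-1], ![2,-1,-1,-1,-1,0,-1], ![2,-1,-1,-1,-1,-1,0]]

set_option maxHeartbeats 1000000 in
lemma main27 (K : V) (hK0 : K 0 = -3) (hKi : ∀ i : Fin 6, K i.succ = 1)
    (v : V) (hv : v ∈ lines) :
    ∃ w ∈ Subgroup.closure (Sgen K), ⇑w v = ![0,0,0,0,0,0,(1:ℤ)] := by
  fin_cases hv
  · refine ⟨refl ![0,1,0,0,0,0,-1] (by decide), rmem K hK0 hKi _ _ (by decide), ?_⟩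
    rw [refl_apply]; decide
  · refine ⟨refl ![0,0,1,0,0,0,-1] (by decide), rmem K hK0 hKi _ _ (by decide), ?_⟩
    rw [refl_apply]; decide
  · refine ⟨refl ![0,0,0,1,0,0,-1] (by decide), rmem K hK0 hKi _ _ (by decide), ?_⟩
    rw [refl_apply]; decide
  · refine ⟨refl ![0,0,0,0,1,0,-1] (by decide), rmem K hK0 hKi _ _ (by decide), ?_⟩
    rw [refl_apply]; decide
  · refine ⟨refl ![0,0,0,0,0,1,-1] (by decide), rmem K hK0 hKi _ _ (by decide), ?_⟩
    rw [refl_apply]; decide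
  · exact ⟨1, one_mem _, rfl⟩
  · refine ⟨refl ![1,-1,-1,0,0,0,-1] (by decide), rmem K hK0 hKi _ _ (by decide), ?_⟩
    rw [refl_apply]; decide
  · refine ⟨refl ![1,-1,0,-1,0,0,-1] (by decide), rmem K hK0 hKi _ _ (by decide), ?_⟩
    rw [refl_apply]; decide
  · refine ⟨refl ![1,-1,0,0,-1,0,-1] (by decide), rmem K hK0 hKi _ _ (by decide), ?_⟩
    rw [refl_apply]; decide
  · refine ⟨refl ![1,-1,0,0,0,-1,-1] (by decide), rmem K hK0 hKi _ _ (by decide), ?_⟩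
    rw [refl_apply]; decide
  · refine ⟨refl ![0,0,1,0,0,0,-1] (by decide) * refl ![1,-1,-1,0,0,0,-1] (by decide), mul_mem (rmem K hK0 hKi _ _ (by decide)) (rmem K hK0 hKi _ _ (by decide)), ?_⟩
    rw [mul_apply, refl_apply, refl_apply]; decide
  · refine ⟨refl ![1,0,-1,-1,0,0,-1] (by decide), rmem K hK0 hKi _ _ (by decide), ?_⟩
    rw [refl_apply]; decide
  · refine ⟨refl ![1,0,-1,0,-1,0,-1] (by decide), rmem K hK0 hKi _ _ (by decide), ?_⟩
    rw [refl_apply]; decide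
  · refine ⟨refl ![1,0,-1,0,0,-1,-1] (by decide), rmem K hK0 hKi _ _ (by decide), ?_⟩
    rw [refl_apply]; decide
  · refine ⟨refl ![0,1,0,0,0,0,-1] (by decide) * refl ![1,-1,-1,0,0,0,-1] (by decide), mul_mem (rmem K hK0 hKi _ _ (by decide)) (rmem K hK0 hKi _ _ (by decide)), ?_⟩
    rw [mul_apply, refl_apply, refl_apply]; decide
  · refine ⟨refl ![1,0,0,-1,-1,0,-1] (by decide), rmem K hK0 hKi _ _ (by decide), ?_⟩
    rw [refl_apply]; decide
  · refine ⟨refl ![1,0,0,-1,0,-1,-1] (by decide), rmem K hK0 hKi _ _ (by decide), ?_⟩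
    rw [refl_apply]; decide
  · refine ⟨refl ![0,1,0,0,0,0,-1] (by decide) * refl ![1,-1,0,-1,0,0,-1] (by decide), mul_mem (rmem K hK0 hKi _ _ (by decide)) (rmem K hK0 hKi _ _ (by decide)), ?_⟩
    rw [mul_apply, refl_apply, refl_apply]; decide
  · refine ⟨refl ![1,0,0,0,-1,-1,-1] (by decide), rmem K hK0 hKi _ _ (by decide), ?_⟩
    rw [refl_apply]; decide
  · refine ⟨refl ![0,1,0,0,0,0,-1] (by decide) * refl ![1,-1,0,0,-1,0,-1] (by decide), mul_mem (rmem K hK0 hKi _ _ (by decide)) (rmem K hK0 hKi _ _ (by decide)), ?_⟩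
    rw [mul_apply, refl_apply, refl_apply]; decide
  · refine ⟨refl ![0,1,0,0,0,0,-1] (by decide) * refl ![1,-1,0,0,0,-1,-1] (by decide), mul_mem (rmem K hK0 hKi _ _ (by decide)) (rmem K hK0 hKi _ _ (by decide)), ?_⟩
    rw [mul_apply, refl_apply, refl_apply]; decide
  · refine ⟨refl ![1,0,0,0,-1,-1,-1] (by decide) * refl ![1,0,-1,-1,0,0,-1] (by decide), mul_mem (rmem K hK0 hKi _ _ (by decide)) (rmem K hK0 hKi _ _ (by decide)), ?_⟩
    rw [mul_apply, refl_apply, refl_apply]; decide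
  · refine ⟨refl ![1,0,0,0,-1,-1,-1] (by decide) * refl ![1,-1,0,-1,0,0,-1] (by decide), mul_mem (rmem K hK0 hKi _ _ (by decide)) (rmem K hK0 hKi _ _ (by decide)), ?_⟩
    rw [mul_apply, refl_apply, refl_apply]; decide
  · refine ⟨refl ![1,0,0,0,-1,-1,-1] (by decide) * refl ![1,-1,-1,0,0,0,-1] (by decide), mul_mem (rmem K hK0 hKi _ _ (by decide)) (rmem K hK0 hKi _ _ (by decide)), ?_⟩
    rw [mul_apply, refl_apply, refl_apply]; decide
  · refine ⟨refl ![1,0,0,-1,0,-1,-1] (by decide) * refl ![1,-1,-1,0,0,0,-1] (by decide), mul_mem (rmem K hK0 hKi _ _ (by decide)) (rmem K hK0 hKi _ _ (by decide)), ?_⟩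
    rw [mul_apply, refl_apply, refl_apply]; decide
  · refine ⟨refl ![1,0,0,-1,-1,0,-1] (by decide) * refl ![1,-1,-1,0,0,0,-1] (by decide), mul_mem (rmem K hK0 hKi _ _ (by decide)) (rmem K hK0 hKi _ _ (by decide)), ?_⟩
    rw [mul_apply, refl_apply, refl_apply]; decide
  · refine ⟨refl ![1,0,0,0,-1,-1,-1] (by decide) * refl ![1,-1,-1,-1,0,0,0] (by decide), mul_mem (rmem K hK0 hKi _ _ (by decide)) (rmem K hK0 hKi _ _ (by decide)), ?_⟩
    rw [mul_apply, refl_apply, refl_apply]; decide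

lemma cc1 (c : ℤ) : 0 ≤ c*(c+1) := by
  rcases le_or_gt 0 c with h|h
  · exact mul_nonneg h (by omega)
  · have := mul_nonneg (by omega : (0:ℤ) ≤ -c) (by omega : (0:ℤ) ≤ -(c+1)); nlinarith [this]

lemma cc0 (c : ℤ) : 0 ≤ c*(c-1) := by
  rcases le_or_gt 0 (c-1) with h|h
  · exact mul_nonneg (by omega) h
  · have := mul_nonneg (by omega : (0:ℤ) ≤ -c) (by omega : (0:ℤ) ≤ -(c-1)); nlinarith [this]

set_option maxHeartbeats 4000000 in
lemma key (K : V) (hK0 : K 0 = -3) (hKi : ∀ i : Fin 6, K i.succ = 1) (lam : V)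
    (h1 : b lam lam = -1) (h2 : b lam K = -1) :
    ∃ w ∈ Subgroup.closure (Sgen K), ⇑w lam = ![0,0,0,0,0,0,(1:ℤ)] := by
  obtain ⟨a, c1, c2, c3, c4, c5, c6, hlam⟩ :
      ∃ a c1 c2 c3 c4 c5 c6, lam = ![a,c1,c2,c3,c4,c5,c6] :=
    ⟨lam 0, lam 1, lam 2, lam 3, lam 4, lam 5, lam 6, by funext j; fin_cases j <;> rfl⟩
  have e0 : lam 0 = a := by rw [hlam]; rfl
  have e1 : lam 1 = c1 := by rw [hlam]; rfl
  have e2 : lam 2 = c2 := by rw [hlam]; rfl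
  have e3 : lam 3 = c3 := by rw [hlam]; rfl
  have e4 : lam 4 = c4 := by rw [hlam]; rfl
  have e5 : lam 5 = c5 := by rw [hlam]; rfl
  have e6 : lam 6 = c6 := by rw [hlam]; rfl
  rw [bdiag, e0, e1, e2, e3, e4, e5, e6] at h1
  rw [bK K hK0 hKi, e0, e1, e2, e3, e4, e5, e6] at h2
  have CS : (c1+c2+c3+c4+c5+c6)^2 ≤ 6*(c1^2+c2^2+c3^2+c4^2+c5^2+c6^2) := by
    linarith [sq_nonneg (c1-c2), sq_nonneg (c1-c3), sq_nonneg (c1-c4), sq_nonneg (c1-c5), sq_nonneg (c1-c6), sq_nonneg (c2-c3), sq_nonneg (c2-c4), sq_nonneg (c2-c5), sq_nonneg (c2-c6), sq_nonneg (c3-c4), sq_nonneg (c3-c5), sq_nonneg (c3-c6), sq_nonneg (c4-c5), sq_nonneg (c4-c6), sq_nonneg (c5-c6)]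
  have hs : c1+c2+c3+c4+c5+c6 = 1 - 3*a := by linarith
  have hq : c1^2+c2^2+c3^2+c4^2+c5^2+c6^2 = a^2+1 := by linarith [h1]
  have key2 : (1 - 3*a)^2 ≤ 6*(a^2+1) := by rw [← hs, ← hq]; exact CS
  have hb1 : -8 ≤ 12*a := by linarith [key2, sq_nonneg (a+1)]
  have hb2 : 12*a ≤ 32 := by linarith [key2, sq_nonneg (a-3)]
  have ha : a = 0 ∨ a = 1 ∨ a = 2 := by omega
  rcases ha with rfl | rfl | rfl
  · -- a = 0
    have t1 : c1*(c1-1) = 0 := by linarith [cc0 c1, cc0 c2, cc0 c3, cc0 c4, cc0 c5, cc0 c6, h1, h2]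
    have t2 : c2*(c2-1) = 0 := by linarith [cc0 c1, cc0 c2, cc0 c3, cc0 c4, cc0 c5, cc0 c6, h1, h2]
    have t3 : c3*(c3-1) = 0 := by linarith [cc0 c1, cc0 c2, cc0 c3, cc0 c4, cc0 c5, cc0 c6, h1, h2]
    have t4 : c4*(c4-1) = 0 := by linarith [cc0 c1, cc0 c2, cc0 c3, cc0 c4, cc0 c5, cc0 c6, h1, h2]
    have t5 : c5*(c5-1) = 0 := by linarith [cc0 c1, cc0 c2, cc0 c3, cc0 c4, cc0 c5, cc0 c6, h1, h2]
    have t6 : c6*(c6-1) = 0 := by linarith [cc0 c1, cc0 c2, cc0 c3, cc0 c4, cc0 c5, cc0 c6, h1, h2]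
    have d1 : c1 = 0 ∨ c1 = 1 := by rcases mul_eq_zero.mp t1 with h|h <;> omega
    have d2 : c2 = 0 ∨ c2 = 1 := by rcases mul_eq_zero.mp t2 with h|h <;> omega
    have d3 : c3 = 0 ∨ c3 = 1 := by rcases mul_eq_zero.mp t3 with h|h <;> omega
    have d4 : c4 = 0 ∨ c4 = 1 := by rcases mul_eq_zero.mp t4 with h|h <;> omega
    have d5 : c5 = 0 ∨ c5 = 1 := by rcases mul_eq_zero.mp t5 with h|h <;> omega
    have d6 : c6 = 0 ∨ c6 = 1 := by rcases mul_eq_zero.mp t6 with h|h <;> omega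
    rcases d1 with rfl|rfl <;> rcases d2 with rfl|rfl <;> rcases d3 with rfl|rfl <;> rcases d4 with rfl|rfl <;> rcases d5 with rfl|rfl <;> rcases d6 with rfl|rfl <;>
      first
        | omega
        | (rw [hlam]; exact main27 K hK0 hKi _ (by decide))
  · -- a = 1
    have t1 : c1*(c1+1) = 0 := by linarith [cc1 c1, cc1 c2, cc1 c3, cc1 c4, cc1 c5, cc1 c6, h1, h2]
    have t2 : c2*(c2+1) = 0 := by linarith [cc1 c1, cc1 c2, cc1 c3, cc1 c4, cc1 c5, cc1 c6, h1, h2]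
    have t3 : c3*(c3+1) = 0 := by linarith [cc1 c1, cc1 c2, cc1 c3, cc1 c4, cc1 c5, cc1 c6, h1, h2]
    have t4 : c4*(c4+1) = 0 := by linarith [cc1 c1, cc1 c2, cc1 c3, cc1 c4, cc1 c5, cc1 c6, h1, h2]
    have t5 : c5*(c5+1) = 0 := by linarith [cc1 c1, cc1 c2, cc1 c3, cc1 c4, cc1 c5, cc1 c6, h1, h2]
    have t6 : c6*(c6+1) = 0 := by linarith [cc1 c1, cc1 c2, cc1 c3, cc1 c4, cc1 c5, cc1 c6, h1, h2]
    have d1 : c1 = 0 ∨ c1 = -1 := by rcases mul_eq_zero.mp t1 with h|h <;> omega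
    have d2 : c2 = 0 ∨ c2 = -1 := by rcases mul_eq_zero.mp t2 with h|h <;> omega
    have d3 : c3 = 0 ∨ c3 = -1 := by rcases mul_eq_zero.mp t3 with h|h <;> omega
    have d4 : c4 = 0 ∨ c4 = -1 := by rcases mul_eq_zero.mp t4 with h|h <;> omega
    have d5 : c5 = 0 ∨ c5 = -1 := by rcases mul_eq_zero.mp t5 with h|h <;> omega
    have d6 : c6 = 0 ∨ c6 = -1 := by rcases mul_eq_zero.mp t6 with h|h <;> omega
    rcases d1 with rfl|rfl <;> rcases d2 with rfl|rfl <;> rcases d3 with rfl|rfl <;> rcases d4 with rfl|rfl <;> rcases d5 with rfl|rfl <;> rcases d6 with rfl|rfl <;>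
      first
        | omega
        | (rw [hlam]; exact main27 K hK0 hKi _ (by decide))
  · -- a = 2
    have t1 : c1*(c1+1) = 0 := by linarith [cc1 c1, cc1 c2, cc1 c3, cc1 c4, cc1 c5, cc1 c6, h1, h2]
    have t2 : c2*(c2+1) = 0 := by linarith [cc1 c1, cc1 c2, cc1 c3, cc1 c4, cc1 c5, cc1 c6, h1, h2]
    have t3 : c3*(c3+1) = 0 := by linarith [cc1 c1, cc1 c2, cc1 c3, cc1 c4, cc1 c5, cc1 c6, h1, h2]
    have t4 : c4*(c4+1) = 0 := by linarith [cc1 c1, cc1 c2, cc1 c3, cc1 c4, cc1 c5, cc1 c6, h1, h2]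
    have t5 : c5*(c5+1) = 0 := by linarith [cc1 c1, cc1 c2, cc1 c3, cc1 c4, cc1 c5, cc1 c6, h1, h2]
    have t6 : c6*(c6+1) = 0 := by linarith [cc1 c1, cc1 c2, cc1 c3, cc1 c4, cc1 c5, cc1 c6, h1, h2]
    have d1 : c1 = 0 ∨ c1 = -1 := by rcases mul_eq_zero.mp t1 with h|h <;> omega
    have d2 : c2 = 0 ∨ c2 = -1 := by rcases mul_eq_zero.mp t2 with h|h <;> omega
    have d3 : c3 = 0 ∨ c3 = -1 := by rcases mul_eq_zero.mp t3 with h|h <;> omega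
    have d4 : c4 = 0 ∨ c4 = -1 := by rcases mul_eq_zero.mp t4 with h|h <;> omega
    have d5 : c5 = 0 ∨ c5 = -1 := by rcases mul_eq_zero.mp t5 with h|h <;> omega
    have d6 : c6 = 0 ∨ c6 = -1 := by rcases mul_eq_zero.mp t6 with h|h <;> omega
    rcases d1 with rfl|rfl <;> rcases d2 with rfl|rfl <;> rcases d3 with rfl|rfl <;> rcases d4 with rfl|rfl <;> rcases d5 with rfl|rfl <;> rcases d6 with rfl|rfl <;>
      first
        | omega
        | (rw [hlam]; exact main27 K hK0 hKi _ (by decide))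

end S9

/-- The Weyl group W(E₆), generated by the reflections s_α, acts transitively on
the 27 classes λ with (λ,λ) = -1 and (λ,K) = -1 (the classes of the 27 lines). -/
theorem stmt_9
    (B : (Fin 7 → ℤ) → (Fin 7 → ℤ) → ℤ)
    (hB : ∀ x y, B x y = x 0 * y 0 - ∑ i : Fin 6, x i.succ * y i.succ)
    (K : Fin 7 → ℤ)
    (hK0 : K 0 = -3) (hKi : ∀ i : Fin 6, K i.succ = 1)
    (Φ : Set (Fin 7 → ℤ))
    (hΦ : Φ = {α | B α α = -2 ∧ B α K = 0})
    (W : Subgroup ((Fin 7 → ℤ) ≃ₗ[ℤ] (Fin 7 → ℤ)))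
    (hW : W = Subgroup.closure
      {s | ∃ α ∈ Φ, ∀ lam, s lam = lam + B α lam • α}) :
    ∀ lam mu : Fin 7 → ℤ,
      B lam lam = -1 → B lam K = -1 → B mu mu = -1 → B mu K = -1 →
      ∃ w ∈ W, w lam = mu := by
  have hBb : B = S9.b := by funext x y; rw [hB]; rfl
  subst hBb
  subst hΦ
  subst hW
  intro lam mu h1 h2 h3 h4
  obtain ⟨w1, hw1, hw1'⟩ := S9.key K hK0 hKi lam h1 h2
  obtain ⟨w2, hw2, hw2'⟩ := S9.key K hK0 hKi mu h3 h4
  refine ⟨w2⁻¹ * w1, mul_mem (inv_mem hw2) hw1, ?_⟩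
  calc ⇑(w2⁻¹ * w1) lam = w2⁻¹ (w1 lam) := rfl
    _ = w2⁻¹ (w2 mu) := by rw [hw1', ← hw2']
    _ = mu := w2.symm_apply_apply mu
end
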